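/- Let θ₀ = arccos(−1/3), k ∈ ℕ, λ₀ = (π − θ₀ + 2kπ)², and define f : ℝ³ → ℝ by f(θ₁,θ₂,λ) = 9cos³(√λ) − cos(√λ) − (cos θ₁ + 1)(3cos(√λ) + cos θ₂), where √λ denotes Real.sqrt λ. Then at the point P = (θ₀, π, λ₀): f(P) = 0; all three first partial derivatives of f vanish at P; and the second partial derivatives at P are ∂²f/∂θ₁² = 0, ∂²f/∂θ₂² = −2/3, ∂²f/∂λ² = 4/λ₀, ∂²f/∂θ₁∂λ = −4/(3√λ₀), ∂²f/∂θ₁∂θ₂ = ∂²f/∂θ₂∂λ = 0. In particular the Hessian of f at P has determinant 32/(27λ₀) ≠ 0, so it is nondegenerate and indefinite and the zero set of f has a conical (Dirac) singularity at P. -/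

import Mathlib

/-- The free dispersion function of the graphyne quantum graph,
f(θ₁,θ₂,λ) = 9cos³(√λ) − cos(√λ) − (cos θ₁ + 1)(3cos(√λ) + cos θ₂). -/
noncomputable def graphyneDispersion (θ₁ θ₂ l : ℝ) : ℝ :=
  9 * (Real.cos (Real.sqrt l)) ^ 3 - Real.cos (Real.sqrt l) -
    (Real.cos θ₁ + 1) * (3 * Real.cos (Real.sqrt l) + Real.cos θ₂)

/-!
Every partial derivative of `f` up to order two is an explicit trigonometric expression, and at
`P` all of them reduce through `cos θ₀ = -1/3`, `cos √λ₀ = cos (π - θ₀) = 1/3` and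
`sin √λ₀ = sin θ₀`, with `sin² θ₀ = 8/9`. Along `θ₂ = π`, `θ₁ = θ₀` the function is the cubic
`9c³ - 3c + 2/3` in `c = cos √λ`, whose derivative `27c² - 3` vanishes at `c = 1/3`; hence
`∂²f/∂λ²` reduces to `54 c (dc/dλ)²`.
-/

open Real Topology

theorem hasDerivAt_cos_sqrt {l : ℝ} (hl : l ≠ 0) :
    HasDerivAt (fun t => cos √t) (-sin √l / (2 * √l)) l :=
  ((hasDerivAt_cos √l).comp l (hasDerivAt_sqrt hl)).congr_deriv (by ring)

section Derivatives

variable (x y l : ℝ)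

theorem hasDerivAt_graphyneDispersion_fst :
    HasDerivAt (fun x => graphyneDispersion x y l) (sin x * (3 * cos √l + cos y)) x :=
  (((hasDerivAt_cos x).add_const 1).mul_const (3 * cos √l + cos y)).const_sub
    (9 * cos √l ^ 3 - cos √l) |>.congr_deriv (by ring)

theorem deriv_graphyneDispersion_fst :
    deriv (fun x => graphyneDispersion x y l) = fun x => sin x * (3 * cos √l + cos y) :=
  funext fun x => (hasDerivAt_graphyneDispersion_fst x y l).deriv

theorem hasDerivAt_graphyneDispersion_snd :
    HasDerivAt (fun y => graphyneDispersion x y l) ((cos x + 1) * sin y) y :=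
  (((hasDerivAt_cos y).const_add (3 * cos √l)).const_mul (cos x + 1)).const_sub
    (9 * cos √l ^ 3 - cos √l) |>.congr_deriv (by ring)

theorem deriv_graphyneDispersion_snd :
    deriv (fun y => graphyneDispersion x y l) = fun y => (cos x + 1) * sin y :=
  funext fun y => (hasDerivAt_graphyneDispersion_snd x y l).deriv

theorem hasDerivAt_graphyneDispersion_thd {l : ℝ} (hl : l ≠ 0) :
    HasDerivAt (fun l => graphyneDispersion x y l)
      ((27 * cos √l ^ 2 - 3 * cos x - 4) * (-sin √l / (2 * √l))) l := by
  have hc := hasDerivAt_cos_sqrt hl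
  refine (((hc.pow 3).const_mul 9).sub hc).sub
    (((hc.const_mul 3).add_const (cos y)).const_mul (cos x + 1)) |>.congr_deriv ?_
  ring

theorem deriv_deriv_graphyneDispersion_fst :
    deriv (deriv (fun x => graphyneDispersion x y l)) x = cos x * (3 * cos √l + cos y) := by
  rw [deriv_graphyneDispersion_fst]
  exact ((hasDerivAt_sin x).mul_const _).deriv

theorem deriv_deriv_graphyneDispersion_snd :
    deriv (deriv (fun y => graphyneDispersion x y l)) y = (cos x + 1) * cos y := by
  rw [deriv_graphyneDispersion_snd]
  exact ((hasDerivAt_sin y).const_mul _).deriv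

theorem deriv_deriv_graphyneDispersion_fst_snd :
    deriv (fun y => deriv (fun x => graphyneDispersion x y l) x) y = -(sin x * sin y) := by
  simp only [deriv_graphyneDispersion_fst]
  refine (((hasDerivAt_cos y).const_add (3 * cos √l)).const_mul (sin x)).deriv.trans ?_
  ring

theorem deriv_deriv_graphyneDispersion_snd_thd :
    deriv (fun l => deriv (fun y => graphyneDispersion x y l) y) l = 0 := by
  simp only [deriv_graphyneDispersion_snd, deriv_const]

theorem deriv_deriv_graphyneDispersion_fst_thd {l : ℝ} (hl : l ≠ 0) :
    deriv (fun l => deriv (fun x => graphyneDispersion x y l) x) l =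
      sin x * (3 * (-sin √l / (2 * √l))) := by
  simp only [deriv_graphyneDispersion_fst]
  exact ((((hasDerivAt_cos_sqrt hl).const_mul 3).add_const (cos y)).const_mul (sin x)).deriv

theorem deriv_deriv_graphyneDispersion_thd {l : ℝ} (hl : 0 < l)
    (hcrit : 27 * cos √l ^ 2 - 3 * cos x - 4 = 0) :
    deriv (deriv (fun l => graphyneDispersion x y l)) l =
      54 * cos √l * (sin √l / (2 * √l)) ^ 2 := by
  have hderiv : deriv (fun l => graphyneDispersion x y l) =ᶠ[𝓝 l]
      fun l => (27 * cos √l ^ 2 - 3 * cos x - 4) * (-sin √l / (2 * √l)) := by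
    filter_upwards [eventually_ne_nhds hl.ne'] with t ht
    exact (hasDerivAt_graphyneDispersion_thd x y ht).deriv
  have hc := hasDerivAt_cos_sqrt hl.ne'
  have hslope : DifferentiableAt ℝ (fun l => -sin √l / (2 * √l)) l := by
    have hsqrt : DifferentiableAt ℝ (fun l => √l) l := (hasDerivAt_sqrt hl.ne').differentiableAt
    have hpos : 2 * √l ≠ 0 := by positivity
    exact (hsqrt.sin.neg).div (hsqrt.const_mul 2) hpos
  rw [hderiv.deriv_eq]
  refine (((((hc.pow 2).const_mul 27).sub_const (3 * cos x)).sub_const 4).mul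
    hslope.hasDerivAt).deriv.trans ?_
  simp only [Pi.pow_apply, hcrit, zero_mul, add_zero]
  ring

end Derivatives

section DiracPoint

variable {θ : ℝ} (hθ : θ < π) (k : ℕ)
include hθ

theorem sqrt_sq_pi_sub_add_two_mul_nat_mul_pi :
    √((π - θ + 2 * k * π) ^ 2) = π - θ + 2 * k * π :=
  sqrt_sq (by linarith [sub_pos.mpr hθ, show 0 ≤ 2 * (k : ℝ) * π by positivity])

theorem cos_sqrt_sq_pi_sub_add_two_mul_nat_mul_pi :
    cos √((π - θ + 2 * k * π) ^ 2) = -cos θ := by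
  rw [sqrt_sq_pi_sub_add_two_mul_nat_mul_pi hθ,
    show π - θ + 2 * k * π = π - θ + k * (2 * π) by ring, cos_add_nat_mul_two_pi, cos_pi_sub]

theorem sin_sqrt_sq_pi_sub_add_two_mul_nat_mul_pi :
    sin √((π - θ + 2 * k * π) ^ 2) = sin θ := by
  rw [sqrt_sq_pi_sub_add_two_mul_nat_mul_pi hθ,
    show π - θ + 2 * k * π = π - θ + k * (2 * π) by ring, sin_add_nat_mul_two_pi, sin_pi_sub]

end DiracPoint

theorem det_fin_three_eq_neg_sq_mul {R : Type*} [CommRing R] (b d e : R) :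
    !![0, 0, b; 0, d, 0; b, 0, e].det = -(b ^ 2 * d) := by
  simp [Matrix.det_fin_three, sq, mul_right_comm]

/-- At P = (θ₀,π,(π−θ₀+2kπ)²), θ₀ = arccos(−1/3), the free dispersion function vanishes
together with its gradient; its Hessian has the stated entries and determinant
32/(27lam0) ≠ 0, so it is nondegenerate (a stable conical Dirac singularity). -/
theorem graphyne_dirac_point_D_eq_two_thirds (k : ℕ) (θ₀ lam0 : ℝ)
    (hθ₀ : θ₀ = Real.arccos (-(1/3))) (hlam0 : lam0 = (π - θ₀ + 2 * (k : ℝ) * π) ^ 2) :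
    graphyneDispersion θ₀ π lam0 = 0 ∧
    deriv (fun x => graphyneDispersion x π lam0) θ₀ = 0 ∧
    deriv (fun y => graphyneDispersion θ₀ y lam0) π = 0 ∧
    deriv (fun l => graphyneDispersion θ₀ π l) lam0 = 0 ∧
    deriv (deriv (fun x => graphyneDispersion x π lam0)) θ₀ = 0 ∧
    deriv (deriv (fun y => graphyneDispersion θ₀ y lam0)) π = -(2/3) ∧
    deriv (deriv (fun l => graphyneDispersion θ₀ π l)) lam0 = 4 / lam0 ∧
    deriv (fun l => deriv (fun x => graphyneDispersion x π l) θ₀) lam0 =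
      -4 / (3 * Real.sqrt lam0) ∧
    deriv (fun y => deriv (fun x => graphyneDispersion x y lam0) θ₀) π = 0 ∧
    deriv (fun l => deriv (fun y => graphyneDispersion θ₀ y l) π) lam0 = 0 ∧
    Matrix.det !![(0 : ℝ), 0, -4 / (3 * Real.sqrt lam0);
                  0, -(2/3), 0;
                  -4 / (3 * Real.sqrt lam0), 0, 4 / lam0] = 32 / (27 * lam0) ∧
    (32 / (27 * lam0) : ℝ) ≠ 0 := by
  have hcos₀ : cos θ₀ = -(1/3) := hθ₀ ▸ cos_arccos (by norm_num) (by norm_num)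
  have hsin₀ : sin θ₀ ^ 2 = 8 / 9 := by rw [sin_sq, hcos₀]; norm_num
  have hθ₀_lt : θ₀ < π := hθ₀ ▸ arccos_lt_pi.mpr (by norm_num)
  have hcos : cos √lam0 = 1 / 3 := by
    rw [hlam0, cos_sqrt_sq_pi_sub_add_two_mul_nat_mul_pi hθ₀_lt, hcos₀]; norm_num
  have hsin : sin √lam0 = sin θ₀ := hlam0 ▸ sin_sqrt_sq_pi_sub_add_two_mul_nat_mul_pi hθ₀_lt k
  have hlam_pos : 0 < lam0 := by rw [hlam0]; positivity
  refine ⟨by norm_num [graphyneDispersion, hcos, hcos₀],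
    by norm_num [(hasDerivAt_graphyneDispersion_fst _ _ _).deriv, hcos],
    by simp [(hasDerivAt_graphyneDispersion_snd _ _ _).deriv],
    by norm_num [(hasDerivAt_graphyneDispersion_thd _ _ hlam_pos.ne').deriv, hcos, hcos₀],
    by norm_num [deriv_deriv_graphyneDispersion_fst, hcos],
    by norm_num [deriv_deriv_graphyneDispersion_snd, hcos₀], ?_, ?_,
    by simp [deriv_deriv_graphyneDispersion_fst_snd], deriv_deriv_graphyneDispersion_snd_thd _ _ _,
    ?_, by positivity⟩
  · rw [deriv_deriv_graphyneDispersion_thd _ _ hlam_pos (by norm_num [hcos, hcos₀]), hcos, hsin,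
      div_pow, hsin₀, mul_pow, sq_sqrt hlam_pos.le]
    field_simp
    ring
  · rw [deriv_deriv_graphyneDispersion_fst_thd _ _ hlam_pos.ne', hsin,
      show sin θ₀ * (3 * (-sin θ₀ / (2 * √lam0))) = -3 * sin θ₀ ^ 2 / (2 * √lam0) by ring, hsin₀]
    field_simp
    ring
  · rw [det_fin_three_eq_neg_sq_mul]
    field_simp
    rw [sq_sqrt hlam_pos.le]
    ring
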